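/- Let κ be a regular cardinal and μ a (κ,κ⁺)-cardinal. Suppose F ⊆ κ⁺ is a finite nonempty set and there is X ∈ μ with rank(X) = η and F ⊆ X. If Y ∈ μ contains F and rank(Y) ≥ η, then there is X' ∈ (μ|Y) ∪ {Y} with F ⊆ X' and rank(X') = η; in particular X ∩ max(F) = X' ∩ max(F) ⊆ Y. -/

import Mathlib

open Set Cardinal Ordinal

noncomputable section

/-- Lower a (small) ordinal of `Ordinal.{1}` to `Ordinal.{0}` (the inverse of `Ordinal.lift`
on its range). -/
noncomputable def olower (o : Ordinal.{1}) : Ordinal.{0} :=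
  sInf {a : Ordinal.{0} | Ordinal.lift.{1} a = o}

/-- The order type of a set of ordinals. -/
noncomputable def otp (A : Set Ordinal.{0}) : Ordinal.{0} :=
  olower (Ordinal.type (Subrel ((· < ·) : Ordinal → Ordinal → Prop) (· ∈ A)))

/-- The canonical order-preserving transfer map from a set of ordinals `X` to a set of
ordinals `Y` of the same order type: an element `a ∈ X` is sent to the unique element of `Y`
occupying the same position. -/
noncomputable def omap (X Y : Set Ordinal) (a : Ordinal) : Ordinal :=
  sInf {b | b ∈ Y ∧ otp (Y ∩ Set.Iio b) = otp (X ∩ Set.Iio a)}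

/-- `IsStar X₁ X₂ X` says `X = X₁ * X₂`: `X₁` and `X₂` have the same order type,
`X = X₁ ∪ X₂`, and `X₁ ∩ X₂ < X₁ \ X₂ < X₂ \ X₁` elementwise. -/
def IsStar (X₁ X₂ X : Set Ordinal) : Prop :=
  otp X₁ = otp X₂ ∧ X = X₁ ∪ X₂ ∧
  (∀ a ∈ X₁ ∩ X₂, ∀ b ∈ X₁ \ X₂, a < b) ∧
  (∀ b ∈ X₁ \ X₂, ∀ c ∈ X₂ \ X₁, b < c)

set_option linter.deprecated false in
/-- A `(κ,κ⁺)`-cardinal (a neat simplified `(κ,1)`-morass presented as a family of sets):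
a family `μ ⊆ ℘_κ(κ⁺)` which is well-founded under strict inclusion, locally small,
homogeneous, directed, locally almost directed, covers `κ⁺` and is neat. -/
structure TwoCardinal (κ : Cardinal.{0}) where
  mu : Set (Set Ordinal)
  mem_sub : ∀ X ∈ mu, X ⊆ Set.Iio (Order.succ κ).ord
  mem_small : ∀ X ∈ mu, (otp X).card < κ
  wf : WellFounded fun X Y : mu => (X : Set Ordinal) ⊂ (Y : Set Ordinal)
  locSmall : ∀ X : mu,
    #{Z : mu // (Z : Set Ordinal) ⊂ (X : Set Ordinal)} < Cardinal.lift.{1} κ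
  homog : ∀ X Y : mu, (wf.apply X).rank = (wf.apply Y).rank →
    otp (X : Set Ordinal) = otp (Y : Set Ordinal) ∧
    {Z | Z ∈ mu ∧ Z ⊂ (Y : Set Ordinal)} =
      (fun Z => omap (X : Set Ordinal) (Y : Set Ordinal) '' Z) ''
        {Z | Z ∈ mu ∧ Z ⊂ (X : Set Ordinal)}
  directed : ∀ X ∈ mu, ∀ Y ∈ mu, ∃ Z ∈ mu, X ⊆ Z ∧ Y ⊆ Z
  locAlmostDirected : ∀ X : mu,
    (∀ Z₁ ∈ mu, ∀ Z₂ ∈ mu, Z₁ ⊂ (X : Set Ordinal) → Z₂ ⊂ (X : Set Ordinal) →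
      ∃ Z ∈ mu, Z ⊂ (X : Set Ordinal) ∧ Z₁ ⊆ Z ∧ Z₂ ⊆ Z) ∨
    (∃ X₁ X₂ : mu, (wf.apply X₁).rank = (wf.apply X₂).rank ∧
      IsStar (X₁ : Set Ordinal) (X₂ : Set Ordinal) (X : Set Ordinal) ∧
      {Z | Z ∈ mu ∧ Z ⊂ (X : Set Ordinal)} =
        {Z | Z ∈ mu ∧ Z ⊂ (X₁ : Set Ordinal)} ∪ {Z | Z ∈ mu ∧ Z ⊂ (X₂ : Set Ordinal)} ∪
          {(X₁ : Set Ordinal), (X₂ : Set Ordinal)})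
  covers : ⋃₀ mu = Set.Iio (Order.succ κ).ord
  neat : ∀ X : mu, (wf.apply X).rank ≠ 0 →
    (X : Set Ordinal) = ⋃₀ {Z | Z ∈ mu ∧ Z ⊂ (X : Set Ordinal)}

namespace TwoCardinal

variable {κ : Cardinal} (M : TwoCardinal κ)

set_option linter.deprecated false in
/-- The rank of an element of `μ` in the well-founded order `(μ, ⊂)`. -/
noncomputable def rank (X : M.mu) : Ordinal := olower ((M.wf.apply X).rank)

/-- The height of the well-founded order `(μ, ⊂)`. -/
noncomputable def ht : Ordinal := sSup (Set.range fun X : M.mu => M.rank X + 1)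

/-- The term `μ_ξ(α)` of the μ-sequence at `α`: equal to `X ∩ α` for any `X ∈ μ` of
rank `ξ` containing `α` (this is independent of the choice of `X`). -/
noncomputable def seq (α ξ : Ordinal) : Set Ordinal :=
  ⋃₀ {S | ∃ X : M.mu, M.rank X = ξ ∧ α ∈ (X : Set Ordinal) ∧
    S = (X : Set Ordinal) ∩ Set.Iio α}

/-- The μ-coloring `m(α,β) = min{rank X : α, β ∈ X ∈ μ}`. -/
noncomputable def mcol (a b : Ordinal) : Ordinal :=
  sInf {ξ | ∃ X : M.mu, M.rank X = ξ ∧ a ∈ (X : Set Ordinal) ∧ b ∈ (X : Set Ordinal)}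

end TwoCardinal

/-!
Everything rests on coherence: if `rank X ≤ rank Z` and `β ∈ X ∩ Z`, then `X ∩ β ⊆ Z`. To see it,
take `W ∈ μ` containing `X` and `Z` and induct on `W`. If `μ|W` is directed, `X` and `Z` lie in a
smaller member. If `W = W₁ * W₂` with `X ⊆ W₁` and `Z ⊆ W₂`, then `W₁ ∩ W₂` is an initial segment
of both halves and the transfer map `W₁ → W₂` fixes it. So `Z` is the image of some `Z' ⊂ W₁` of
the same rank that contains `β`, and the induction hypothesis in `W₁` applies.

The set `X'` is found by induction on `Y`: we move to a proper predecessor of `Y` that still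
contains `F` and has rank at least `rank X`. When `μ|Y` is directed, neatness and the finiteness
of `F` give such a predecessor. When `Y = Y₁ * Y₂`, one of the two halves works, because by
coherence `F` cannot meet both `Y₁ \ Y₂` and `Y₂ \ Y₁`. Finally, coherence applied to `X`
and `X'` in both directions, at `max F`, gives the equality of initial segments.
-/

section OrderType

variable {A X Y : Set Ordinal.{0}} {o a b : Ordinal.{0}}

theorem olower_lift (a : Ordinal.{0}) : olower (Ordinal.lift.{1} a) = a := by
  simp [olower, Ordinal.lift_inj]

theorem lift_otp (hA : A ⊆ Iio o) :
    Ordinal.lift.{1} (otp A) = type (Subrel ((· < ·) : Ordinal → Ordinal → Prop) (· ∈ A)) := by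
  have hle : type (Subrel ((· < ·) : Ordinal → Ordinal → Prop) (· ∈ A)) ≤ Ordinal.lift.{1} o := by
    rw [← typein_ordinal, ← type_subrel, type_le_iff']
    exact ⟨⟨⟨inclusion hA, inclusion_injective hA⟩, Iff.rfl⟩⟩
  obtain ⟨a, ha⟩ := mem_range_lift_of_le hle
  rw [otp, ← ha, olower_lift]

theorem lift_otp_inter_Iio (hA : A ⊆ Iio o) (hb : b ∈ A) :
    Ordinal.lift.{1} (otp (A ∩ Iio b)) =
      typein (Subrel ((· < ·) : Ordinal → Ordinal → Prop) (· ∈ A)) ⟨b, hb⟩ := by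
  rw [lift_otp (inter_subset_left.trans hA), ← type_subrel, type_eq]
  exact ⟨⟨⟨fun x => ⟨⟨x.1, x.2.1⟩, x.2.2⟩, fun y => ⟨y.1.1, y.1.2, y.2⟩, fun _ => rfl,
    fun _ => rfl⟩, Iff.rfl⟩⟩

theorem otp_inter_Iio_lt_otp_inter_Iio_iff (hA : A ⊆ Iio o) (ha : a ∈ A) (hb : b ∈ A) :
    otp (A ∩ Iio a) < otp (A ∩ Iio b) ↔ a < b := by
  rw [← Ordinal.lift_lt.{1}, lift_otp_inter_Iio hA ha, lift_otp_inter_Iio hA hb,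
    typein_lt_typein]
  rfl

theorem otp_inter_Iio_injOn (hA : A ⊆ Iio o) : InjOn (fun b => otp (A ∩ Iio b)) A :=
  StrictMonoOn.injOn fun _ ha _ hb => (otp_inter_Iio_lt_otp_inter_Iio_iff hA ha hb).2

theorem exists_otp_inter_Iio_eq (hA : A ⊆ Iio o) {γ : Ordinal} (hγ : γ < otp A) :
    ∃ b ∈ A, otp (A ∩ Iio b) = γ := by
  rw [← Ordinal.lift_lt.{1}, lift_otp hA] at hγ
  obtain ⟨⟨b, hb⟩, hbγ⟩ := typein_surj _ hγ
  exact ⟨b, hb, by rw [← Ordinal.lift_inj.{1}, lift_otp_inter_Iio hA hb, hbγ]⟩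

theorem otp_inter_Iio_lt_otp (hA : A ⊆ Iio o) (hb : b ∈ A) : otp (A ∩ Iio b) < otp A := by
  rw [← Ordinal.lift_lt.{1}, lift_otp_inter_Iio hA hb, lift_otp hA]
  exact typein_lt_type _ _

theorem omap_eq_of_otp_eq (hY : Y ⊆ Iio o) (hb : b ∈ Y)
    (h : otp (Y ∩ Iio b) = otp (X ∩ Iio a)) : omap X Y a = b := by
  have hsingleton : {b' | b' ∈ Y ∧ otp (Y ∩ Iio b') = otp (X ∩ Iio a)} = {b} := by
    ext b'
    refine ⟨fun ⟨hb', h'⟩ => otp_inter_Iio_injOn hY hb' hb (h'.trans h.symm), ?_⟩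
    rintro rfl
    exact ⟨hb, h⟩
  rw [omap, hsingleton, csInf_singleton]

theorem omap_eq_self (hY : Y ⊆ Iio o) (ha : a ∈ Y) (h : X ∩ Iio a = Y ∩ Iio a) :
    omap X Y a = a :=
  omap_eq_of_otp_eq hY ha (by rw [h])

theorem otp_inter_Iio_omap (hX : X ⊆ Iio o) (hY : Y ⊆ Iio o) (hXY : otp X = otp Y)
    (ha : a ∈ X) : otp (Y ∩ Iio (omap X Y a)) = otp (X ∩ Iio a) := by
  obtain ⟨b, hb, hba⟩ := exists_otp_inter_Iio_eq hY (hXY ▸ otp_inter_Iio_lt_otp hX ha)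
  rwa [omap_eq_of_otp_eq hY hb hba]

theorem omap_injOn (hX : X ⊆ Iio o) (hY : Y ⊆ Iio o) (hXY : otp X = otp Y) :
    InjOn (omap X Y) X := fun a ha a' ha' h =>
  otp_inter_Iio_injOn hX ha ha' <| by
    dsimp only
    rw [← otp_inter_Iio_omap hX hY hXY ha, ← otp_inter_Iio_omap hX hY hXY ha', h]

end OrderType

theorem IsStar.inter_Iio_eq {X₁ X₂ X : Set Ordinal} (h : IsStar X₁ X₂ X) (hne : (X₁ \ X₂).Nonempty)
    {γ : Ordinal} (hγ : γ ∈ X₁ ∩ X₂) : X₁ ∩ Iio γ = X₂ ∩ Iio γ := by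
  obtain ⟨b, hb⟩ := hne
  ext δ
  constructor
  · rintro ⟨hδ₁, hδγ⟩
    exact ⟨by_contra fun hδ₂ => lt_asymm (h.2.2.1 γ hγ δ ⟨hδ₁, hδ₂⟩) hδγ, hδγ⟩
  · rintro ⟨hδ₂, hδγ⟩
    exact ⟨by_contra fun hδ₁ =>
      lt_asymm ((h.2.2.1 γ hγ b hb).trans (h.2.2.2 b hb δ ⟨hδ₂, hδ₁⟩)) hδγ, hδγ⟩

namespace WellFounded

variable {α : Type*} {r : α → α → Prop} (hwf : WellFounded r)

theorem rank_le_of_forall_rank_lt {a b : α}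
    (h : ∀ a', r a' a → (hwf.apply a').rank < (hwf.apply b).rank) :
    (hwf.apply a).rank ≤ (hwf.apply b).rank := by
  rw [Acc.rank_eq]
  exact Ordinal.iSup_le fun c => Order.succ_le_of_lt (h c.1 c.2)

theorem exists_rel_rank_le_of_rank_lt {a b : α} (h : (hwf.apply a).rank < (hwf.apply b).rank) :
    ∃ c, r c b ∧ (hwf.apply a).rank ≤ (hwf.apply c).rank := by
  by_contra! hc
  exact h.not_ge (hwf.rank_le_of_forall_rank_lt hc)

theorem rank_eq_of_bisimulation (R : α → α → Prop)
    (forth : ∀ a b, R a b → ∀ a', r a' a → ∃ b', r b' b ∧ R a' b')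
    (back : ∀ a b, R a b → ∀ b', r b' b → ∃ a', r a' a ∧ R a' b')
    {a b : α} (hab : R a b) : (hwf.apply a).rank = (hwf.apply b).rank := by
  induction a using hwf.induction generalizing b with
  | _ a ih =>
  apply le_antisymm
  · refine hwf.rank_le_of_forall_rank_lt fun a' ha' => ?_
    obtain ⟨b', hb', hR⟩ := forth a b hab a' ha'
    exact (ih a' ha' hR).trans_lt (Acc.rank_lt_of_rel _ hb')
  · refine hwf.rank_le_of_forall_rank_lt fun b' hb' => ?_
    obtain ⟨a', ha', hR⟩ := back a b hab b' hb'
    exact (ih a' ha' hR).symm.trans_lt (Acc.rank_lt_of_rel _ ha')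

end WellFounded

namespace TwoCardinal

variable {κ : Cardinal} (M : TwoCardinal κ)

theorem rank_lt_univ (X : M.mu) : (M.wf.apply X).rank < Ordinal.univ.{0, 1} := by
  induction X using M.wf.induction with
  | _ X ih =>
  rw [Acc.rank_eq]
  refine Ordinal.iSup_lt_of_lt_cof ?_ fun Z => ?_
  · rw [Ordinal.cof_univ]
    exact (M.locSmall X).trans (Cardinal.lift_lt_univ' κ)
  · rw [← Cardinal.ord_univ]
    exact (Cardinal.isSuccLimit_ord Cardinal.aleph0_lt_univ.le).succ_lt
      (Cardinal.ord_univ ▸ ih Z Z.2)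

theorem lift_rank (X : M.mu) : Ordinal.lift.{1} (M.rank X) = (M.wf.apply X).rank := by
  obtain ⟨a, ha⟩ := Ordinal.liftPrincipalSeg.{0, 1}.mem_range_of_rel_top
    (Ordinal.liftPrincipalSeg_top.{0, 1} ▸ M.rank_lt_univ X)
  rw [Ordinal.liftPrincipalSeg_coe] at ha
  rw [rank, ← ha, olower_lift]

variable {M}

theorem rank_le_rank_iff {X Y : M.mu} :
    M.rank X ≤ M.rank Y ↔ (M.wf.apply X).rank ≤ (M.wf.apply Y).rank := by
  rw [← M.lift_rank X, ← M.lift_rank Y, Ordinal.lift_le]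

theorem rank_eq_rank_iff {X Y : M.mu} :
    M.rank X = M.rank Y ↔ (M.wf.apply X).rank = (M.wf.apply Y).rank := by
  rw [← M.lift_rank X, ← M.lift_rank Y, Ordinal.lift_inj]

theorem rank_lt_of_ssubset {X Y : M.mu} (h : (X : Set Ordinal) ⊂ Y) : M.rank X < M.rank Y := by
  rw [← Ordinal.lift_lt.{1}, M.lift_rank, M.lift_rank]
  exact (M.wf.apply Y).rank_lt_of_rel h

theorem rank_le_of_subset {X Y : M.mu} (h : (X : Set Ordinal) ⊆ Y) : M.rank X ≤ M.rank Y := by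
  rcases h.ssubset_or_eq with h | h
  · exact (rank_lt_of_ssubset h).le
  · rw [Subtype.ext h]

theorem exists_ssubset_rank_le_of_rank_lt {X Y : M.mu} (h : M.rank X < M.rank Y) :
    ∃ Z : M.mu, (Z : Set Ordinal) ⊂ Y ∧ M.rank X ≤ M.rank Z := by
  rw [← Ordinal.lift_lt.{1}, M.lift_rank, M.lift_rank] at h
  obtain ⟨Z, hZY, hXZ⟩ := M.wf.exists_rel_rank_le_of_rank_lt h
  exact ⟨Z, hZY, rank_le_rank_iff.2 hXZ⟩

variable (M)

/-- `μ|X` -/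
def restrict (X : Set Ordinal) : Set (Set Ordinal) := {Z | Z ∈ M.mu ∧ Z ⊂ X}

/-- The second alternative of local almost directedness: `W = W₁ * W₂`. -/
def IsStarSplit (W W₁ W₂ : M.mu) : Prop :=
  M.rank W₁ = M.rank W₂ ∧ IsStar W₁ W₂ W ∧
    M.restrict W = M.restrict W₁ ∪ M.restrict W₂ ∪ {(W₁ : Set Ordinal), (W₂ : Set Ordinal)}

theorem directedOn_or_isStarSplit (W : M.mu) :
    DirectedOn (· ⊆ ·) (M.restrict W) ∨ ∃ W₁ W₂ : M.mu, M.IsStarSplit W W₁ W₂ := by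
  refine (M.locAlmostDirected W).imp (fun h Z₁ hZ₁ Z₂ hZ₂ => ?_)
    fun ⟨W₁, W₂, hr, hstar, hres⟩ => ⟨W₁, W₂, rank_eq_rank_iff.2 hr, hstar, hres⟩
  obtain ⟨Z, hZ, hZW, hZ₁Z, hZ₂Z⟩ := h Z₁ hZ₁.1 Z₂ hZ₂.1 hZ₁.2 hZ₂.2
  exact ⟨Z, ⟨hZ, hZW⟩, hZ₁Z, hZ₂Z⟩

variable {M}

theorem sUnion_restrict {Y : M.mu} {P : Set Ordinal} (hP : P ∈ M.restrict Y) :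
    ⋃₀ M.restrict Y = Y :=
  (M.neat Y (zero_le.trans_lt
    ((M.wf.apply Y).rank_lt_of_rel (a := ⟨P, hP.1⟩) hP.2)).ne').symm

theorem exists_mem_restrict_superset_of_directedOn {Y : M.mu}
    (hdir : DirectedOn (· ⊆ ·) (M.restrict Y)) {P : Set Ordinal} (hP : P ∈ M.restrict Y)
    {F : Set Ordinal} (hF : F.Finite) (hFY : F ⊆ Y) : ∃ Z ∈ M.restrict Y, P ⊆ Z ∧ F ⊆ Z := by
  obtain ⟨Z₀, hZ₀, hFZ₀⟩ := hdir.exists_mem_subset_of_finite_of_subset_sUnion ⟨P, hP⟩ hF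
    (by rwa [sUnion_restrict hP])
  obtain ⟨Z, hZ, hPZ, hZ₀Z⟩ := hdir P hP Z₀ hZ₀
  exact ⟨Z, hZ, hPZ, hFZ₀.trans hZ₀Z⟩

variable {W W₁ W₂ : M.mu}

theorem IsStarSplit.ssubset_left (hs : M.IsStarSplit W W₁ W₂) : (W₁ : Set Ordinal) ⊂ W := by
  have h : (W₁ : Set Ordinal) ∈ M.restrict W := by rw [hs.2.2]; simp
  exact h.2

theorem IsStarSplit.ssubset_right (hs : M.IsStarSplit W W₁ W₂) : (W₂ : Set Ordinal) ⊂ W := by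
  have h : (W₂ : Set Ordinal) ∈ M.restrict W := by rw [hs.2.2]; simp
  exact h.2

theorem IsStarSplit.subset_or_subset (hs : M.IsStarSplit W W₁ W₂) {U : M.mu}
    (hU : (U : Set Ordinal) ⊂ W) :
    (U : Set Ordinal) ⊆ W₁ ∨ (U : Set Ordinal) ⊆ W₂ := by
  have h : (U : Set Ordinal) ∈ M.restrict W := ⟨U.2, hU⟩
  rw [hs.2.2] at h
  rcases h with (h | h) | h | h
  · exact Or.inl h.2.subset
  · exact Or.inr h.2.subset
  · exact Or.inl h.subset
  · exact Or.inr h.subset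

theorem IsStarSplit.inter_Iio_eq (hs : M.IsStarSplit W W₁ W₂) {γ : Ordinal}
    (hγ : γ ∈ (W₁ : Set Ordinal) ∩ W₂) :
    (W₁ : Set Ordinal) ∩ Iio γ = (W₂ : Set Ordinal) ∩ Iio γ := by
  refine hs.2.1.inter_Iio_eq (nonempty_of_not_subset fun h₁₂ => ?_) hγ
  rcases h₁₂.ssubset_or_eq with h₁₂ | h₁₂
  · exact (rank_lt_of_ssubset h₁₂).ne hs.1
  · have hW : (W : Set Ordinal) = W₁ := by rw [hs.2.1.2.1, h₁₂, union_self]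
    exact hs.ssubset_left.ne hW.symm

theorem restrict_eq_image_omap (hr : M.rank W₁ = M.rank W₂) :
    M.restrict W₂ = image (omap W₁ W₂) '' M.restrict W₁ :=
  (M.homog W₁ W₂ (rank_eq_rank_iff.1 hr)).2

theorem omap_injOn_of_rank_eq (hr : M.rank W₁ = M.rank W₂) :
    InjOn (omap W₁ W₂) W₁ :=
  omap_injOn (M.mem_sub _ W₁.2) (M.mem_sub _ W₂.2) (M.homog W₁ W₂ (rank_eq_rank_iff.1 hr)).1

theorem rank_eq_of_coe_eq_image_omap (hr : M.rank W₁ = M.rank W₂) {V Z : M.mu}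
    (hV : (V : Set Ordinal) ⊂ W₁) (hZ : (Z : Set Ordinal) = omap W₁ W₂ '' V) :
    M.rank Z = M.rank V := by
  have hres := restrict_eq_image_omap hr
  have hinj := omap_injOn_of_rank_eq hr
  have himage {V : Set Ordinal} (hV : V ∈ M.restrict W₁) : omap W₁ W₂ '' V ∈ M.restrict W₂ :=
    hres ▸ mem_image_of_mem _ hV
  refine (rank_eq_rank_iff.2 (M.wf.rank_eq_of_bisimulation
    (fun V Z : M.mu => (V : Set Ordinal) ⊂ W₁ ∧ (Z : Set Ordinal) = omap W₁ W₂ '' V)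
    ?_ ?_ ⟨hV, hZ⟩)).symm
  · rintro V Z ⟨hV, hZ⟩ V' hV'
    have hV'W : (V' : Set Ordinal) ⊂ W₁ := hV'.trans hV
    refine ⟨⟨_, (himage ⟨V'.2, hV'W⟩).1⟩, ?_, hV'W, rfl⟩
    change omap W₁ W₂ '' V' ⊂ Z
    rwa [hZ, hinj.image_ssubset_image_iff hV'W.subset hV.subset]
  · rintro V Z ⟨hV, hZ⟩ Z' hZ'
    have hZW : (Z : Set Ordinal) ⊂ W₂ := hZ ▸ (himage ⟨V.2, hV⟩).2
    have hZ'W : (Z' : Set Ordinal) ∈ M.restrict W₂ := ⟨Z'.2, hZ'.trans hZW⟩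
    rw [hres] at hZ'W
    obtain ⟨U, ⟨hU, hUW⟩, hUZ'⟩ := hZ'W
    refine ⟨⟨U, hU⟩, ?_, hUW, hUZ'.symm⟩
    change U ⊂ V
    rwa [← hinj.image_ssubset_image_iff hUW.subset hV.subset, hUZ', ← hZ]

/-- The cross case of coherence: `Z ⊆ W₂` is pulled back to `W₁` by the transfer map, which
fixes `W₁ ∩ W₂`. -/
theorem inter_Iio_subset_of_subset_of_subset (hr : M.rank W₁ = M.rank W₂)
    (hseg : ∀ γ ∈ (W₁ : Set Ordinal) ∩ W₂, (W₁ : Set Ordinal) ∩ Iio γ = (W₂ : Set Ordinal) ∩ Iio γ)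
    {β : Ordinal} (ih : ∀ X Z : M.mu, (X : Set Ordinal) ⊆ W₁ → (Z : Set Ordinal) ⊆ W₁ →
      M.rank X ≤ M.rank Z → β ∈ (X : Set Ordinal) → β ∈ (Z : Set Ordinal) →
        (X : Set Ordinal) ∩ Iio β ⊆ Z)
    {X Z : M.mu} (hX : (X : Set Ordinal) ⊆ W₁) (hZ : (Z : Set Ordinal) ⊆ W₂)
    (hXZ : M.rank X ≤ M.rank Z) (hβX : β ∈ (X : Set Ordinal)) (hβZ : β ∈ (Z : Set Ordinal)) :
    (X : Set Ordinal) ∩ Iio β ⊆ Z := by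
  have hβ : β ∈ (W₁ : Set Ordinal) ∩ W₂ := ⟨hX hβX, hZ hβZ⟩
  have hbelow : (X : Set Ordinal) ∩ Iio β ⊆ (W₂ : Set Ordinal) ∩ Iio β :=
    hseg β hβ ▸ inter_subset_inter_left _ hX
  rcases hZ.ssubset_or_eq with hZ | hZ
  swap
  · rw [hZ]
    exact hbelow.trans inter_subset_left
  have hfix : ∀ γ ∈ (W₁ : Set Ordinal) ∩ W₂, omap W₁ W₂ γ = γ := fun γ hγ =>
    omap_eq_self (M.mem_sub _ W₂.2) hγ.2 (hseg γ hγ)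
  have hZ' : (Z : Set Ordinal) ∈ M.restrict W₂ := ⟨Z.2, hZ⟩
  rw [restrict_eq_image_omap hr] at hZ'
  obtain ⟨V, ⟨hV, hVW⟩, hVZ⟩ := hZ'
  have hrk : M.rank Z = M.rank ⟨V, hV⟩ := rank_eq_of_coe_eq_image_omap hr hVW hVZ.symm
  have hβV : β ∈ V := by
    rw [← hVZ] at hβZ
    obtain ⟨β', hβ'V, hβ'β⟩ := hβZ
    rwa [omap_injOn_of_rank_eq hr (hVW.subset hβ'V) hβ.1 (hβ'β.trans (hfix β hβ).symm)] at hβ'V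
  intro γ hγ
  have hγW : γ ∈ (W₁ : Set Ordinal) ∩ W₂ := ⟨hX hγ.1, (hbelow hγ).1⟩
  rw [← hVZ]
  exact ⟨γ, ih X ⟨V, hV⟩ hX hVW.subset (hXZ.trans hrk.le) hβX hβV hγ, hfix γ hγW⟩

theorem inter_Iio_subset_of_subset (W : M.mu) {β : Ordinal} :
    ∀ X Z : M.mu, (X : Set Ordinal) ⊆ W → (Z : Set Ordinal) ⊆ W → M.rank X ≤ M.rank Z →
      β ∈ (X : Set Ordinal) → β ∈ (Z : Set Ordinal) → (X : Set Ordinal) ∩ Iio β ⊆ Z := by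
  induction W using M.wf.induction with
  | _ W ih =>
  intro X Z hXW hZW hXZ hβX hβZ
  rcases hZW.ssubset_or_eq with hZW | hZW
  swap
  · rw [hZW]
    exact inter_subset_left.trans hXW
  rcases hXW.ssubset_or_eq with hXW | hXW
  swap
  · exact absurd (rank_lt_of_ssubset (hXW ▸ hZW)) hXZ.not_gt
  rcases M.directedOn_or_isStarSplit W with hdir | ⟨W₁, W₂, hs⟩
  · obtain ⟨V, ⟨hV, hVW⟩, hXV, hZV⟩ := hdir X ⟨X.2, hXW⟩ Z ⟨Z.2, hZW⟩
    exact ih ⟨V, hV⟩ hVW X Z hXV hZV hXZ hβX hβZ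
  have ih₁ := ih W₁ hs.ssubset_left
  have ih₂ := ih W₂ hs.ssubset_right
  rcases hs.subset_or_subset hXW with hX | hX <;> rcases hs.subset_or_subset hZW with hZ | hZ
  · exact ih₁ X Z hX hZ hXZ hβX hβZ
  · exact inter_Iio_subset_of_subset_of_subset hs.1 (fun _ => hs.inter_Iio_eq) ih₁
      hX hZ hXZ hβX hβZ
  · exact inter_Iio_subset_of_subset_of_subset hs.1.symm
      (fun _ hγ => (hs.inter_Iio_eq ⟨hγ.2, hγ.1⟩).symm) ih₂ hX hZ hXZ hβX hβZ
  · exact ih₂ X Z hX hZ hXZ hβX hβZ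

theorem inter_Iio_subset_of_rank_le {X Z : M.mu} (hXZ : M.rank X ≤ M.rank Z) {β : Ordinal}
    (hβX : β ∈ (X : Set Ordinal)) (hβZ : β ∈ (Z : Set Ordinal)) :
    (X : Set Ordinal) ∩ Iio β ⊆ Z := by
  obtain ⟨W, hW, hXW, hZW⟩ := M.directed X X.2 Z Z.2
  exact inter_Iio_subset_of_subset ⟨W, hW⟩ X Z hXW hZW hXZ hβX hβZ

/-- A point of `S` in `W₂ \ W₁` lies above one in `W₁ \ W₂`, which coherence would put into `W₂`. -/
theorem IsStarSplit.subset_or_subset_of_rank_le {X : M.mu} (hs : M.IsStarSplit W W₁ W₂)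
    (hX : M.rank X ≤ M.rank W₂) {S : Set Ordinal} (hSX : S ⊆ X) (hSW : S ⊆ W) :
    S ⊆ W₁ ∨ S ⊆ W₂ := by
  by_contra! h
  obtain ⟨a, haS, haW₁⟩ := not_subset.1 h.1
  obtain ⟨c, hcS, hcW₂⟩ := not_subset.1 h.2
  have hW : (W : Set Ordinal) = (W₁ : Set Ordinal) ∪ W₂ := hs.2.1.2.1
  have haW₂ : a ∈ (W₂ : Set Ordinal) := (hW ▸ hSW haS).resolve_left haW₁
  have hcW₁ : c ∈ (W₁ : Set Ordinal) := (hW ▸ hSW hcS).resolve_right hcW₂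
  have hca : c < a := hs.2.1.2.2.2 c ⟨hcW₁, hcW₂⟩ a ⟨haW₂, haW₁⟩
  exact hcW₂ (inter_Iio_subset_of_rank_le hX (hSX haS) haW₂ ⟨hSX hcS, hca⟩)

theorem exists_subset_rank_eq (Y : M.mu) :
    ∀ (X : M.mu) {F : Set Ordinal}, F.Finite → F ⊆ X → F ⊆ Y → M.rank X ≤ M.rank Y →
      ∃ X' : M.mu, (X' : Set Ordinal) ⊆ Y ∧ F ⊆ X' ∧ M.rank X' = M.rank X := by
  induction Y using M.wf.induction with
  | _ Y ih =>
  intro X F hF hFX hFY hXY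
  rcases hXY.eq_or_lt with hXY | hXY
  · exact ⟨Y, subset_rfl, hFY, hXY.symm⟩
  suffices ∃ Z : M.mu, (Z : Set Ordinal) ⊂ Y ∧ F ⊆ Z ∧ M.rank X ≤ M.rank Z by
    obtain ⟨Z, hZY, hFZ, hXZ⟩ := this
    obtain ⟨X', hX'Z, hFX', hrk⟩ := ih Z hZY X hF hFX hFZ hXZ
    exact ⟨X', hX'Z.trans hZY.subset, hFX', hrk⟩
  obtain ⟨P, hPY, hXP⟩ := exists_ssubset_rank_le_of_rank_lt hXY
  rcases M.directedOn_or_isStarSplit Y with hdir | ⟨Y₁, Y₂, hs⟩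
  · obtain ⟨Z, ⟨hZ, hZY⟩, hPZ, hFZ⟩ :=
      exists_mem_restrict_superset_of_directedOn hdir ⟨P.2, hPY⟩ hF hFY
    exact ⟨⟨Z, hZ⟩, hZY, hFZ, hXP.trans (rank_le_of_subset (Y := ⟨Z, hZ⟩) hPZ)⟩
  have hXY₁ : M.rank X ≤ M.rank Y₁ := hXP.trans <| by
    rcases hs.subset_or_subset hPY with hP | hP
    · exact rank_le_of_subset hP
    · exact (rank_le_of_subset hP).trans_eq hs.1.symm
  rcases hs.subset_or_subset_of_rank_le (hXY₁.trans_eq hs.1) hFX hFY with hF₁ | hF₂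
  · exact ⟨Y₁, hs.ssubset_left, hF₁, hXY₁⟩
  · exact ⟨Y₂, hs.ssubset_right, hF₂, hXY₁.trans_eq hs.1⟩

end TwoCardinal

theorem localization_lemma_general (κ : Cardinal) (M : TwoCardinal κ)
    (F : Finset Ordinal) (hne : F.Nonempty)
    (η : Ordinal) (X : M.mu) (hrkX : M.rank X = η) (hFX : ↑F ⊆ (X : Set Ordinal))
    (Y : M.mu) (hFY : ↑F ⊆ (Y : Set Ordinal)) (hη : η ≤ M.rank Y) :
    ∃ X' : M.mu, ((X' : Set Ordinal) ⊂ (Y : Set Ordinal) ∨ X' = Y) ∧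
      ↑F ⊆ (X' : Set Ordinal) ∧ M.rank X' = η ∧
      (X : Set Ordinal) ∩ Set.Iio (F.max' hne) = (X' : Set Ordinal) ∩ Set.Iio (F.max' hne) ∧
      (X' : Set Ordinal) ∩ Set.Iio (F.max' hne) ⊆ (Y : Set Ordinal) := by
  subst hrkX
  obtain ⟨X', hX'Y, hFX', hrk⟩ := M.exists_subset_rank_eq Y X F.finite_toSet hFX hFY hη
  have hmax : F.max' hne ∈ (F : Set Ordinal) := F.max'_mem hne
  refine ⟨X', ?_, hFX', hrk, ?_, inter_subset_left.trans hX'Y⟩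
  · rcases hX'Y.ssubset_or_eq with h | h
    · exact Or.inl h
    · exact Or.inr (Subtype.ext h)
  · exact Subset.antisymm
      (subset_inter (TwoCardinal.inter_Iio_subset_of_rank_le hrk.ge (hFX hmax) (hFX' hmax))
        inter_subset_right)
      (subset_inter (TwoCardinal.inter_Iio_subset_of_rank_le hrk.le (hFX' hmax) (hFX hmax))
        inter_subset_right)

/-- The localization lemma. -/
theorem localization_lemma (κ : Cardinal) (hκ : κ.IsRegular) (M : TwoCardinal κ)
    (F : Finset Ordinal) (hne : F.Nonempty) (hF : ↑F ⊆ Set.Iio (Order.succ κ).ord)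
    (η : Ordinal) (X : M.mu) (hrkX : M.rank X = η) (hFX : ↑F ⊆ (X : Set Ordinal))
    (Y : M.mu) (hFY : ↑F ⊆ (Y : Set Ordinal)) (hη : η ≤ M.rank Y) :
    ∃ X' : M.mu, ((X' : Set Ordinal) ⊂ (Y : Set Ordinal) ∨ X' = Y) ∧
      ↑F ⊆ (X' : Set Ordinal) ∧ M.rank X' = η ∧
      (X : Set Ordinal) ∩ Set.Iio (F.max' hne) = (X' : Set Ordinal) ∩ Set.Iio (F.max' hne) ∧
      (X' : Set Ordinal) ∩ Set.Iio (F.max' hne) ⊆ (Y : Set Ordinal) :=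
  localization_lemma_general κ M F hne η X hrkX hFX Y hFY hη
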